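/- arXiv:1005.0736 — 8 statements merged into one kernel-verified Lean document; each statement's English description precedes it below -/
import Mathlib

section
/- For every quaternion matrix A of size m × n there exists a quaternion matrix B of size n × m satisfying the four Penrose equations: (A·B)ᴴ = A·B, (B·A)ᴴ = B·A, A·B·A = A, and B·A·B = B. -/
/-!
With `M = Aᴴ A`, the candidate is `B = S Aᴴ`, where `S` is a real polynomial in `M` with
`M² S = M`; such an `S` is automatically Hermitian and commutes with `M`, and then the four Penrose
equations are formal consequences. To find `S`, write an annihilating polynomial of `M` as
`Xᵏ q` with `q(0) ≠ 0`: then `Mᵏ (M S - 1) = 0` for `S = -q(0)⁻¹ (q - q(0)) / X`, and the power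
`Mᵏ` can be cancelled down to `M` because `M² Y = Mᴴ M Y = 0` forces `M Y = 0`. That last
cancellation is positivity of `Zᴴ Z`, which holds over `ℍ` because `x̄ x = |x|²` is a nonnegative
real, i.e. `ℍ` is a star-ordered ring.
-/

open scoped Quaternion Matrix
open Polynomial

instance Quaternion.instStarModuleOfTrivialStar {R : Type*} [CommRing R] [Star R]
    [TrivialStar R] : StarModule R ℍ[R] :=
  ⟨fun r a => by ext <;> simp [star_trivial]⟩

namespace Quaternion

/-- `x ≤ y` iff `y - x` is a nonnegative real, as in `ComplexOrder`. -/
@[reducible]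
protected def partialOrder : PartialOrder ℍ[ℝ] where
  le x y := x.re ≤ y.re ∧ x.im = y.im
  le_refl _ := ⟨le_rfl, rfl⟩
  le_trans _ _ _ h₁ h₂ := ⟨h₁.1.trans h₂.1, h₁.2.trans h₂.2⟩
  le_antisymm x y h₁ h₂ := by rw [← re_add_im x, ← re_add_im y, h₁.1.antisymm h₂.1, h₁.2]

attribute [local instance] Quaternion.partialOrder

theorem le_def {x y : ℍ[ℝ]} : x ≤ y ↔ x.re ≤ y.re ∧ x.im = y.im := Iff.rfl

theorem starOrderedRing : StarOrderedRing ℍ[ℝ] := by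
  refine .of_nonneg_iff' (fun h z => ⟨by simpa using h.1, by simpa using h.2⟩) fun x => ?_
  rw [le_def]
  constructor
  · rintro ⟨hre, him⟩
    refine ⟨(√x.re : ℝ), ?_⟩
    rw [star_coe, ← coe_mul, Real.mul_self_sqrt (by simpa using hre)]
    conv_lhs => rw [← re_add_im x, ← him]
    simp
  · rintro ⟨s, rfl⟩
    rw [star_mul_self]
    simp [normSq_nonneg]

end Quaternion

attribute [local instance] Quaternion.partialOrder Quaternion.starOrderedRing

theorem IsSelfAdjoint.aeval {R A : Type*} [CommSemiring R] [StarRing R] [TrivialStar R]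
    [Semiring A] [StarRing A] [Algebra R A] [StarModule R A] {a : A} (ha : IsSelfAdjoint a)
    (p : R[X]) : IsSelfAdjoint (Polynomial.aeval a p) := by
  induction p using Polynomial.induction_on' with
  | add p q hp hq => simpa only [map_add] using hp.add hq
  | monomial k r =>
    rw [aeval_monomial, ← Algebra.smul_def]
    exact (IsSelfAdjoint.all r).smul (ha.pow k)

theorem mul_eq_zero_of_pow_mul_eq_zero {R : Type*} [Semiring R] {a : R}
    (ha : ∀ b, a * (a * b) = 0 → a * b = 0) : ∀ (k : ℕ) (b : R), a ^ k * b = 0 → a * b = 0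
  | 0, b, h => by rw [pow_zero, one_mul] at h; rw [h, mul_zero]
  | k + 1, b, h =>
    ha b (mul_eq_zero_of_pow_mul_eq_zero ha k (a * b) (by rwa [← mul_assoc, ← pow_succ]))

theorem exists_mul_mul_aeval_eq_self {K A : Type*} [Field K] [Ring A] [Algebra K A] {a : A}
    (hai : IsIntegral K a) (ha : ∀ b, a * (a * b) = 0 → a * b = 0) :
    ∃ p : K[X], a * a * aeval a p = a := by
  obtain ⟨f, hf_monic, hf⟩ := hai
  obtain ⟨q, hfq, hq⟩ := f.exists_eq_pow_rootMultiplicity_mul_and_not_dvd hf_monic.ne_zero 0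
  rw [C_0, sub_zero] at hfq hq
  set k := f.rootMultiplicity 0
  set c := q.coeff 0
  have hc : c ≠ 0 := fun h => hq (X_dvd_iff.mpr h)
  set p := -(C c⁻¹ * q.divX)
  have hdvd : X ^ k * (X * p - 1) = -C c⁻¹ * f := by
    have hinv : C c⁻¹ * C c = 1 := by rw [← C_mul, inv_mul_cancel₀ hc, C_1]
    rw [hfq]
    linear_combination (-C c⁻¹ * X ^ k) * q.X_mul_divX_add + X ^ k * hinv
  have hpow : a ^ k * (a * aeval a p - 1) = 0 := by
    have := congrArg (aeval a) hdvd
    rwa [map_mul, map_mul (aeval a) _ f, show aeval a f = 0 from hf, mul_zero, map_pow, map_sub,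
      map_mul, aeval_X, map_one] at this
  refine ⟨p, ?_⟩
  have := mul_eq_zero_of_pow_mul_eq_zero ha k _ hpow
  rwa [mul_sub, mul_one, sub_eq_zero, ← mul_assoc] at this

namespace Matrix

variable {m n R : Type*} [Fintype m] [Fintype n]

def IsMoorePenroseInverse [NonUnitalNonAssocSemiring R] [Star R] (A : Matrix m n R)
    (B : Matrix n m R) : Prop :=
  (A * B)ᴴ = A * B ∧ (B * A)ᴴ = B * A ∧ A * B * A = A ∧ B * A * B = B

theorem isMoorePenroseInverse_mul_conjTranspose [Semiring R] [StarRing R] {A : Matrix m n R}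
    {S : Matrix n n R} (hS : S.IsHermitian) (hSA : Commute S (Aᴴ * A))
    (hA : A * S * (Aᴴ * A) = A) : A.IsMoorePenroseInverse (S * Aᴴ) := by
  have hA' : Aᴴ * A * S * Aᴴ = Aᴴ := by
    simpa [conjTranspose_mul, hS.eq, Matrix.mul_assoc] using congrArg conjTranspose hA
  refine ⟨?_, ?_, ?_, ?_⟩
  · simp [conjTranspose_mul, hS.eq, Matrix.mul_assoc]
  · rw [Matrix.mul_assoc, conjTranspose_mul, hS.eq, (isHermitian_conjTranspose_mul_self A).eq,
      hSA.eq]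
  · simpa only [Matrix.mul_assoc] using hA
  · simpa only [Matrix.mul_assoc] using congrArg (S * ·) hA'

variable [Ring R] [PartialOrder R] [StarRing R] [StarOrderedRing R] [NoZeroDivisors R]

theorem IsHermitian.mul_mul_eq_zero_iff {p : Type*} {M : Matrix n n R} (hM : M.IsHermitian)
    (B : Matrix n p R) : M * M * B = 0 ↔ M * B = 0 := by
  simpa only [hM.eq] using conjTranspose_mul_self_mul_eq_zero M B

theorem mul_mul_conjTranspose_mul_self_eq_self [DecidableEq n] {A : Matrix m n R}
    {S : Matrix n n R} (hSA : Commute S (Aᴴ * A)) (h : Aᴴ * A * (Aᴴ * A) * S = Aᴴ * A) :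
    A * S * (Aᴴ * A) = A := by
  have : Aᴴ * A * (Aᴴ * A * S - 1) = 0 := by rw [mul_sub, mul_one, ← Matrix.mul_assoc, h, sub_self]
  rw [conjTranspose_mul_self_mul_eq_zero, Matrix.mul_sub, Matrix.mul_one, sub_eq_zero] at this
  rwa [Matrix.mul_assoc, hSA.eq]

end Matrix

/-- For every quaternion matrix `A` of size `m × n` there exists a quaternion matrix `B` of
size `n × m` satisfying the four Penrose equations. -/
theorem exists_moore_penrose_inverse (m n : ℕ) (A : Matrix (Fin m) (Fin n) ℍ[ℝ]) :
    ∃ B : Matrix (Fin n) (Fin m) ℍ[ℝ],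
      (A * B)ᴴ = A * B ∧ (B * A)ᴴ = B * A ∧ A * B * A = A ∧ B * A * B = B := by
  have hM := Matrix.isHermitian_conjTranspose_mul_self A
  obtain ⟨p, hp⟩ := exists_mul_mul_aeval_eq_self (IsIntegral.of_finite ℝ (Aᴴ * A)) fun B hB =>
    (hM.mul_mul_eq_zero_iff B).mp (by rwa [Matrix.mul_assoc])
  have hS : (aeval (Aᴴ * A) p).IsHermitian := hM.isSelfAdjoint.aeval p
  have hSA : Commute (aeval (Aᴴ * A) p) (Aᴴ * A) := by
    simpa using ((Commute.all X p).map (aeval (Aᴴ * A))).symm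
  exact ⟨_, Matrix.isMoorePenroseInverse_mul_conjTranspose hS hSA
    (Matrix.mul_mul_conjTranspose_mul_self_eq_self hSA hp)⟩
end

section
/- Let A ∈ ℍ^{m×n} be a quaternion matrix and let B ∈ ℍ^{n×m} satisfy the four Penrose equations for A. Then B = lim_{α→0⁺} Aᴴ·(A·Aᴴ + α·I)⁻¹, i.e. the function α ↦ Aᴴ·(A·Aᴴ + α·I)⁻¹ (using the ring inverse of the invertible matrix A·Aᴴ + α·I in ℍ^{m×m}) tends to B as α tends to 0 from the right within the positive reals. -/
/-! The Penrose equations give `B·A·Aᴴ = Aᴴ` and `B·Bᴴ·Aᴴ = B`, hence the intertwining relation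
`(1 + α·B·Bᴴ)·Aᴴ = B·(A·Aᴴ + α·1)`. For `α > 0` the matrix `A·Aᴴ + α·1` is invertible: it is
positive definite, hence a non-zero-divisor, hence a unit in the Artinian ring of quaternion
matrices. Since `1 + α·B·Bᴴ` is invertible near `α = 0`, this gives
`Aᴴ·(A·Aᴴ + α·1)⁻¹ = (1 + α·B·Bᴴ)⁻¹·B`, and the right-hand side tends to `B` by continuity of the
inverse at `1`. -/

open scoped Quaternion Matrix

open Filter Topology Matrix

namespace Matrix

variable {m n R : Type*} [Fintype m] [Fintype n]

structure IsMoorePenroseInverse_s4 [NonUnitalSemiring R] [StarRing R]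
    (A : Matrix m n R) (B : Matrix n m R) : Prop where
  isHermitian_mul : (A * B).IsHermitian
  isHermitian_mul_rev : (B * A).IsHermitian
  mul_mul_self : A * B * A = A
  mul_mul_self_rev : B * A * B = B

namespace IsMoorePenroseInverse_s4

variable [Semiring R] [StarRing R] {A : Matrix m n R} {B : Matrix n m R}

theorem mul_mul_conjTranspose_self (h : IsMoorePenroseInverse_s4 A B) : B * (A * Aᴴ) = Aᴴ := by
  rw [← Matrix.mul_assoc, ← h.isHermitian_mul_rev.eq, ← conjTranspose_mul, ← Matrix.mul_assoc,
    h.mul_mul_self]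

theorem mul_conjTranspose_mul_conjTranspose (h : IsMoorePenroseInverse_s4 A B) :
    B * Bᴴ * Aᴴ = B := by
  rw [Matrix.mul_assoc, ← conjTranspose_mul, h.isHermitian_mul.eq, ← Matrix.mul_assoc,
    h.mul_mul_self_rev]

variable [DecidableEq m] [DecidableEq n] {S : Type*} [Monoid S] [DistribMulAction S R]
  [IsScalarTower S R R] [SMulCommClass S R R]

theorem one_add_smul_mul_conjTranspose_mul (h : IsMoorePenroseInverse_s4 A B) (c : S) :
    (1 + c • (B * Bᴴ)) * Aᴴ = B * (A * Aᴴ + c • 1) := by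
  rw [Matrix.add_mul, Matrix.one_mul, Matrix.smul_mul, h.mul_conjTranspose_mul_conjTranspose,
    Matrix.mul_add, h.mul_mul_conjTranspose_self, Matrix.mul_smul, Matrix.mul_one]

theorem conjTranspose_mul_inverse (h : IsMoorePenroseInverse_s4 A B) {c : S}
    (hA : IsUnit (A * Aᴴ + c • 1)) (hB : IsUnit (1 + c • (B * Bᴴ))) :
    Aᴴ * Ring.inverse (A * Aᴴ + c • 1) = Ring.inverse (1 + c • (B * Bᴴ)) * B :=
  calc Aᴴ * Ring.inverse (A * Aᴴ + c • 1)
      = Ring.inverse (1 + c • (B * Bᴴ)) * ((1 + c • (B * Bᴴ)) * Aᴴ) *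
          Ring.inverse (A * Aᴴ + c • 1) := by
        rw [← Matrix.mul_assoc, Ring.inverse_mul_cancel _ hB, Matrix.one_mul]
    _ = Ring.inverse (1 + c • (B * Bᴴ)) * B := by
        rw [h.one_add_smul_mul_conjTranspose_mul, Matrix.mul_assoc, Matrix.mul_assoc,
          Ring.mul_inverse_cancel _ hA, Matrix.mul_one]

end IsMoorePenroseInverse_s4

end Matrix

namespace NormedRing

variable {𝕜 R : Type*} [NormedField 𝕜] [NormedRing R] [NormedAlgebra 𝕜 R]
  [HasSummableGeomSeries R]

theorem eventually_isUnit_one_add_smul (x : R) : ∀ᶠ t in 𝓝 (0 : 𝕜), IsUnit (1 + t • x) := by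
  have hc : Continuous fun t : 𝕜 => 1 + t • x := by fun_prop
  exact hc.continuousAt.eventually_mem (Units.isOpen.mem_nhds (by simp))

theorem tendsto_inverse_one_add_smul (x : R) :
    Tendsto (fun t : 𝕜 => Ring.inverse (1 + t • x)) (𝓝 0) (𝓝 1) := by
  have hc : Continuous fun t : 𝕜 => 1 + t • x := by fun_prop
  have h := (NormedRing.inverse_continuousAt (1 : Rˣ)).tendsto.comp (hc.tendsto' 0 1 (by simp))
  rwa [Units.val_one, Ring.inverse_one] at h

end NormedRing

namespace Quaternion

variable {m n R : Type*} [Fintype n]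

theorem re_mul_conjTranspose_apply_self [CommRing R] (W : Matrix m n ℍ[R]) (i : m) :
    ((W * Wᴴ) i i).re = ∑ j, normSq (W i j) := by
  simp only [mul_apply, conjTranspose_apply, self_mul_star]
  exact map_sum (QuaternionAlgebra.reₗ (R := R) (-1) 0 (-1)) _ _

variable [Fintype m] [DecidableEq m] [Field R] [LinearOrder R] [IsStrictOrderedRing R]

theorem isUnit_mul_conjTranspose_add_smul_one (A : Matrix m n ℍ[R]) {c : R} (hc : 0 < c) :
    IsUnit (A * Aᴴ + c • 1) := by
  rw [IsArtinianRing.isUnit_iff_isRightRegular, isRightRegular_iff_left_eq_zero_of_mul]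
  intro X hX
  have hsum : ∀ i, ∑ j, normSq ((X * A) i j) + c * ∑ j, normSq (X i j) = 0 := fun i => by
    have h : (X * A) * (X * A)ᴴ + c • (X * Xᴴ) = X * (A * Aᴴ + c • 1) * Xᴴ := by
      simp [Matrix.mul_add, Matrix.add_mul, Matrix.mul_assoc, conjTranspose_mul]
    rw [hX, Matrix.zero_mul] at h
    have hii := congrArg (fun M => (M i i).re) h
    simpa only [Matrix.add_apply, Matrix.smul_apply, re_add, re_smul, smul_eq_mul,
      re_mul_conjTranspose_apply_self, Matrix.zero_apply, re_zero] using hii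
  refine Matrix.ext fun i j => ?_
  have hXi : ∑ j, normSq (X i j) = 0 := by
    have h₁ : 0 ≤ ∑ j, normSq ((X * A) i j) := Finset.sum_nonneg fun _ _ => normSq_nonneg
    have h₂ : 0 ≤ ∑ j, normSq (X i j) := Finset.sum_nonneg fun _ _ => normSq_nonneg
    nlinarith [hsum i]
  rw [Finset.sum_eq_zero_iff_of_nonneg fun _ _ => normSq_nonneg] at hXi
  exact normSq_eq_zero.mp (hXi j (Finset.mem_univ j))

end Quaternion

/-- Limit representation of the Moore–Penrose inverse:
`A⁺ = lim_{α→0⁺} Aᴴ·(A·Aᴴ + α·I)⁻¹`. -/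
theorem moore_penrose_limit_right (m n : ℕ) (A : Matrix (Fin m) (Fin n) ℍ[ℝ])
    (B : Matrix (Fin n) (Fin m) ℍ[ℝ])
    (hB1 : (A * B)ᴴ = A * B) (hB2 : (B * A)ᴴ = B * A)
    (hB3 : A * B * A = A) (hB4 : B * A * B = B) :
    Filter.Tendsto
      (fun α : ℝ =>
        Aᴴ * Ring.inverse (A * Aᴴ + α • (1 : Matrix (Fin m) (Fin m) ℍ[ℝ])))
      (nhdsWithin 0 (Set.Ioi 0)) (nhds B) := by
  have hMP : IsMoorePenroseInverse_s4 A B := ⟨hB1, hB2, hB3, hB4⟩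
  open scoped Matrix.Norms.Operator in
  have hlim : Tendsto (fun α : ℝ => Ring.inverse (1 + α • (B * Bᴴ)) * B) (𝓝 0) (𝓝 B) := by
    have hmul : Continuous fun X : Matrix (Fin n) (Fin n) ℍ[ℝ] => X * B :=
      continuous_id.matrix_mul continuous_const
    have h := (hmul.tendsto 1).comp (NormedRing.tendsto_inverse_one_add_smul (𝕜 := ℝ) (B * Bᴴ))
    rwa [Matrix.one_mul] at h
  open scoped Matrix.Norms.Operator in
  have hunit : ∀ᶠ α : ℝ in 𝓝 0, IsUnit (1 + α • (B * Bᴴ)) :=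
    NormedRing.eventually_isUnit_one_add_smul (B * Bᴴ)
  refine (hlim.mono_left nhdsWithin_le_nhds).congr' ?_
  filter_upwards [self_mem_nhdsWithin, nhdsWithin_le_nhds hunit] with α hα hαB
  exact (hMP.conjTranspose_mul_inverse
    (Quaternion.isUnit_mul_conjTranspose_add_smul_one A hα) hαB).symm
end

section
/- Let A ∈ ℍ^{m×n} be a quaternion matrix and let B ∈ ℍ^{n×m} satisfy the four Penrose equations for A. Then B = lim_{α→0⁺} (AᴴA + α·I)⁻¹·Aᴴ, i.e. the function α ↦ (AᴴA + α·I)⁻¹·Aᴴ (using the ring inverse of the invertible matrix AᴴA + α·I in ℍ^{n×n}) tends to B as α tends to 0 from the right within the positive reals. -/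
open scoped Quaternion Matrix
open Filter Topology

/-!
Put `C = Bᴴ * B`. The Penrose equations give `Aᴴ * A * B = Aᴴ` and `Aᴴ * C = B`, hence
`(Aᴴ * A + α • 1) * B = Aᴴ * (1 + α • C)`. For `α > 0` both `Aᴴ * A + α • 1` and `1 + α • C` are
invertible, since `x ᵥ* (Aᴴ * A + α • 1) = 0` forces `‖x ᵥ* Aᴴ‖² + α ‖x‖² = 0`. Therefore
`(Aᴴ * A + α • 1)⁻¹ * Aᴴ = B * (1 + α • C)⁻¹`, which tends to `B` by continuity of inversion at `1`.
-/

theorem tendsto_inverse_one_add_smul {𝕜 𝔸 : Type*} [NormedRing 𝔸] [HasSummableGeomSeries 𝔸]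
    [Semiring 𝕜] [TopologicalSpace 𝕜] [Module 𝕜 𝔸] [ContinuousSMul 𝕜 𝔸] (c : 𝔸) :
    Tendsto (fun t : 𝕜 => Ring.inverse (1 + t • c)) (𝓝 0) (𝓝 1) := by
  have hcont : ContinuousAt Ring.inverse (1 + (0 : 𝕜) • c) := by
    simpa using NormedRing.inverse_continuousAt (1 : 𝔸ˣ)
  simpa [Function.comp_def] using hcont.tendsto.comp (Continuous.tendsto (by fun_prop) (0 : 𝕜))

namespace Quaternion

variable {R : Type*} {n : Type*} [Fintype n]

theorem re_dotProduct_star_self [CommRing R] (x : n → ℍ[R]) :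
    (x ⬝ᵥ star x).re = ∑ i, normSq (x i) := by
  simp only [dotProduct, Pi.star_apply, self_mul_star]
  exact map_sum (QuaternionAlgebra.reₗ _ _ _) _ _

variable [CommRing R] [LinearOrder R] [IsStrictOrderedRing R]

theorem re_dotProduct_star_self_nonneg (x : n → ℍ[R]) : 0 ≤ (x ⬝ᵥ star x).re := by
  rw [re_dotProduct_star_self]
  exact Finset.sum_nonneg fun i _ => normSq_nonneg

theorem re_dotProduct_star_self_eq_zero (x : n → ℍ[R]) : (x ⬝ᵥ star x).re = 0 ↔ x = 0 := by
  rw [re_dotProduct_star_self, Finset.sum_eq_zero_iff_of_nonneg fun i _ => normSq_nonneg]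
  simp [funext_iff, normSq_eq_zero]

end Quaternion

namespace Matrix

variable {m n : Type*} [Fintype n]

theorem isUnit_of_vecMul_injective {K : Type*} [DivisionRing K] [DecidableEq n]
    {M : Matrix n n K} (h : Function.Injective M.vecMul) : IsUnit M := by
  obtain ⟨N, hN⟩ := vecMul_surjective_iff_exists_left_inverse.mp
    ((LinearMap.injective_iff_surjective (f := M.vecMulLinear)).mp h)
  exact isUnit_iff_exists_inv'.mpr ⟨N, hN⟩

theorem isUnit_conjTranspose_mul_self_add_smul_one [Fintype m] {R : Type*} [Field R] [LinearOrder R]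
    [IsStrictOrderedRing R] [DecidableEq n] (A : Matrix m n ℍ[R]) {α : R} (hα : 0 < α) :
    IsUnit (Aᴴ * A + α • 1) := by
  refine isUnit_of_vecMul_injective <|
    (injective_iff_map_eq_zero (vecMulLinear _)).mpr fun x hx => ?_
  set y := x ᵥ* Aᴴ
  have hre : (y ⬝ᵥ star y).re + α * (x ⬝ᵥ star x).re = 0 := by
    have h := congrArg (fun v => (v ⬝ᵥ star x).re) hx
    simp only [vecMulLinear_apply, vecMul_add, ← vecMul_vecMul, vecMul_smul, vecMul_one,
      add_dotProduct, smul_dotProduct, zero_dotProduct] at h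
    have hstar : A *ᵥ star x = star y := by simp [y, star_vecMul]
    rwa [← dotProduct_mulVec, hstar, Quaternion.re_add, Quaternion.re_smul, smul_eq_mul,
      Quaternion.re_zero] at h
  have hx : (x ⬝ᵥ star x).re = 0 := by
    nlinarith [Quaternion.re_dotProduct_star_self_nonneg y,
      Quaternion.re_dotProduct_star_self_nonneg x]
  exact (Quaternion.re_dotProduct_star_self_eq_zero x).mp hx

theorem isUnit_one_add_smul_conjTranspose_mul_self [Fintype m] {R : Type*} [Field R] [LinearOrder R]
    [IsStrictOrderedRing R] [DecidableEq n] (A : Matrix m n ℍ[R]) {α : R} (hα : 0 ≤ α) :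
    IsUnit (1 + α • (Aᴴ * A)) := by
  obtain rfl | hα := hα.eq_or_lt
  · simp
  have hscale : 1 + α • (Aᴴ * A) = α • (Aᴴ * A + α⁻¹ • 1) := by
    rw [smul_add, smul_smul, mul_inv_cancel₀ hα.ne', one_smul, add_comm]
  rw [hscale]
  exact (isUnit_smul_iff (Units.mk0 α hα.ne') _).mpr
    (isUnit_conjTranspose_mul_self_add_smul_one A (inv_pos.mpr hα))

theorem inverse_mul_eq_mul_inverse [Fintype m] {R : Type*} [Semiring R] [DecidableEq m]
    [DecidableEq n] {M : Matrix m m R} {N : Matrix n n R} {X Y : Matrix m n R}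
    (hM : IsUnit M) (hN : IsUnit N) (h : M * X = Y * N) :
    Ring.inverse M * Y = X * Ring.inverse N := by
  calc Ring.inverse M * Y = Ring.inverse M * (Y * N) * Ring.inverse N := by
        rw [Matrix.mul_assoc, Matrix.mul_assoc, Ring.mul_inverse_cancel _ hN, Matrix.mul_one]
    _ = X * Ring.inverse N := by
        rw [← h, ← Matrix.mul_assoc, Ring.inverse_mul_cancel _ hM, Matrix.one_mul]

section NormedRing

-- The norm only serves to transfer continuity of `Ring.inverse` from normed rings.
attribute [local instance] Matrix.linftyOpNormedRing Matrix.linftyOpNormedAlgebra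

theorem tendsto_mul_inverse_one_add_smul {K : Type*} [NormedRing K] [NormedAlgebra ℝ K]
    [FiniteDimensional ℝ K] [DecidableEq n] (B : Matrix m n K) (C : Matrix n n K) :
    Tendsto (fun t : ℝ => B * Ring.inverse (1 + t • C)) (𝓝 0) (𝓝 B) := by
  have hB : Tendsto (B * ·) (𝓝 (1 : Matrix n n K)) (𝓝 B) := by
    simpa using (continuous_const.matrix_mul continuous_id).tendsto (1 : Matrix n n K)
  exact hB.comp (tendsto_inverse_one_add_smul C)

end NormedRing

section MoorePenrose

variable [Fintype m] {K : Type*} [Semiring K] [StarRing K] {A : Matrix m n K} {B : Matrix n m K}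

theorem conjTranspose_mul_mul_eq_conjTranspose (h₁ : (A * B)ᴴ = A * B) (h₃ : A * B * A = A) :
    Aᴴ * A * B = Aᴴ := by
  conv_rhs => rw [← h₃, conjTranspose_mul, h₁]
  rw [Matrix.mul_assoc]

theorem conjTranspose_mul_conjTranspose_mul_self (h₂ : (B * A)ᴴ = B * A)
    (h₄ : B * A * B = B) : Aᴴ * (Bᴴ * B) = B := by
  conv_rhs => rw [← h₄, ← h₂, conjTranspose_mul, Matrix.mul_assoc]

theorem conjTranspose_mul_self_add_smul_one_mul {S : Type*} [CommSemiring S] [Algebra S K]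
    [DecidableEq n] [DecidableEq m] (h₁ : (A * B)ᴴ = A * B) (h₂ : (B * A)ᴴ = B * A)
    (h₃ : A * B * A = A) (h₄ : B * A * B = B) (α : S) :
    (Aᴴ * A + α • 1) * B = Aᴴ * (1 + α • (Bᴴ * B)) := by
  rw [Matrix.add_mul, Matrix.smul_mul, Matrix.one_mul,
    conjTranspose_mul_mul_eq_conjTranspose h₁ h₃, Matrix.mul_add, Matrix.mul_one, Matrix.mul_smul,
    conjTranspose_mul_conjTranspose_mul_self h₂ h₄]

end MoorePenrose

end Matrix

open Matrix in
/-- Limit representation of the Moore–Penrose inverse: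
`A⁺ = lim_{α→0⁺} (AᴴA + α·I)⁻¹·Aᴴ`. -/
theorem moore_penrose_limit_left (m n : ℕ) (A : Matrix (Fin m) (Fin n) ℍ[ℝ])
    (B : Matrix (Fin n) (Fin m) ℍ[ℝ])
    (hB1 : (A * B)ᴴ = A * B) (hB2 : (B * A)ᴴ = B * A)
    (hB3 : A * B * A = A) (hB4 : B * A * B = B) :
    Filter.Tendsto
      (fun α : ℝ =>
        Ring.inverse (Aᴴ * A + α • (1 : Matrix (Fin n) (Fin n) ℍ[ℝ])) * Aᴴ)
      (nhdsWithin 0 (Set.Ioi 0)) (nhds B) := by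
  have hpush (α : ℝ) (hα : 0 < α) :
      Ring.inverse (Aᴴ * A + α • 1) * Aᴴ = B * Ring.inverse (1 + α • (Bᴴ * B)) :=
    inverse_mul_eq_mul_inverse (isUnit_conjTranspose_mul_self_add_smul_one A hα)
      (isUnit_one_add_smul_conjTranspose_mul_self B hα.le)
      (conjTranspose_mul_self_add_smul_one_mul hB1 hB2 hB3 hB4 α)
  exact ((tendsto_mul_inverse_one_add_smul B (Bᴴ * B)).mono_left nhdsWithin_le_nhds).congr'
    (eventually_nhdsWithin_of_forall fun α hα => (hpush α hα).symm)
end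

section
/- Let A ∈ ℍ^{m×n} be a quaternion matrix, let B ∈ ℍ^{n×m} satisfy the four Penrose equations for A, and let y ∈ ℍ^m. Set x⁰ = B·y (matrix–vector product). Then for every x ∈ ℍ^n, ‖A·x⁰ − y‖ ≤ ‖A·x − y‖, where ‖v‖ = √(Σᵢ |vᵢ|²) is the ℓ²-norm of a quaternion vector. That is, x⁰ = B·y minimizes ‖A·x − y‖ over all x ∈ ℍ^n. -/
open scoped Quaternion Matrix

/-!
Write `r = A·(B·y) − y` for the residual of `x⁰ = B·y`. The Penrose equations `(A·B)ᴴ = A·B` and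
`A·B·A = A` give `Aᴴ·A·B = Aᴴ`, i.e. the normal equations `Aᴴ·r = 0`: the residual is orthogonal
to the range of `A`. Since `A·x − y = A·(x − x⁰) + r`, Pythagoras gives
`‖A·x − y‖² = ‖A·(x − x⁰)‖² + ‖r‖² ≥ ‖r‖²`.
-/

namespace Matrix

variable {R : Type*} [Ring R] [StarRing R] {m n : Type*} [Fintype m] [Fintype n]

theorem conjTranspose_mul_mul_eq_conjTranspose_s9 {A : Matrix m n R} {B : Matrix n m R}
    (hAB : (A * B)ᴴ = A * B) (hABA : A * B * A = A) : Aᴴ * (A * B) = Aᴴ := by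
  rw [← hAB, ← conjTranspose_mul, hABA]

theorem conjTranspose_mulVec_residual_eq_zero {A : Matrix m n R} {B : Matrix n m R}
    (hAB : (A * B)ᴴ = A * B) (hABA : A * B * A = A) (y : m → R) :
    Aᴴ *ᵥ (A *ᵥ (B *ᵥ y) - y) = 0 := by
  rw [mulVec_sub, mulVec_mulVec, mulVec_mulVec, Matrix.mul_assoc,
    conjTranspose_mul_mul_eq_conjTranspose_s9 hAB hABA, sub_self]

theorem star_dotProduct_mulVec_eq_zero {A : Matrix m n R} {w : m → R} (hw : Aᴴ *ᵥ w = 0)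
    (v : n → R) : star w ⬝ᵥ (A *ᵥ v) = 0 := by
  rw [dotProduct_mulVec, ← conjTranspose_conjTranspose A, ← star_mulVec, hw,
    star_zero, zero_dotProduct]

theorem star_dotProduct_self_mulVec_add {A : Matrix m n R} {w : m → R} (hw : Aᴴ *ᵥ w = 0)
    (v : n → R) :
    star (A *ᵥ v + w) ⬝ᵥ (A *ᵥ v + w) = star (A *ᵥ v) ⬝ᵥ (A *ᵥ v) + star w ⬝ᵥ w := by
  have hcross : star w ⬝ᵥ (A *ᵥ v) = 0 := star_dotProduct_mulVec_eq_zero hw v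
  rw [star_add, add_dotProduct, dotProduct_add, dotProduct_add, hcross,
    star_dotProduct (A *ᵥ v) w, hcross, star_zero, add_zero, zero_add]

theorem star_dotProduct_self_residual {A : Matrix m n R} {B : Matrix n m R}
    (hAB : (A * B)ᴴ = A * B) (hABA : A * B * A = A) (x : n → R) (y : m → R) :
    star (A *ᵥ x - y) ⬝ᵥ (A *ᵥ x - y) =
      star (A *ᵥ (x - B *ᵥ y)) ⬝ᵥ (A *ᵥ (x - B *ᵥ y)) +
        star (A *ᵥ (B *ᵥ y) - y) ⬝ᵥ (A *ᵥ (B *ᵥ y) - y) := by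
  have hsplit : A *ᵥ x - y = A *ᵥ (x - B *ᵥ y) + (A *ᵥ (B *ᵥ y) - y) := by
    rw [mulVec_sub]; abel
  rw [hsplit, star_dotProduct_self_mulVec_add (conjTranspose_mulVec_residual_eq_zero hAB hABA y)]

end Matrix

theorem Quaternion.re_star_dotProduct_self {ι : Type*} [Fintype ι] (f : ι → ℍ[ℝ]) :
    (star f ⬝ᵥ f).re = ∑ i, ‖f i‖ ^ 2 := by
  refine (map_sum (QuaternionAlgebra.reₗ (-1 : ℝ) 0 (-1)) _ _).trans
    (Finset.sum_congr rfl fun i _ => ?_)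
  change (star (f i) * f i).re = _
  rw [star_mul_self, re_coe, normSq_eq_norm_mul_self, sq]

theorem moore_penrose_least_squares_right_general (m n : ℕ) (A : Matrix (Fin m) (Fin n) ℍ[ℝ])
    (B : Matrix (Fin n) (Fin m) ℍ[ℝ])
    (hB1 : (A * B)ᴴ = A * B)
    (hB3 : A * B * A = A)
    (y : Fin m → ℍ[ℝ]) :
    ∀ x : Fin n → ℍ[ℝ],
      Real.sqrt (∑ i, ‖A.mulVec (B.mulVec y) i - y i‖ ^ 2) ≤
        Real.sqrt (∑ i, ‖A.mulVec x i - y i‖ ^ 2) := by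
  intro x
  refine Real.sqrt_le_sqrt ?_
  simp only [← Pi.sub_apply (A *ᵥ _) y, ← Quaternion.re_star_dotProduct_self,
    Matrix.star_dotProduct_self_residual hB1 hB3 x y]
  refine le_add_of_nonneg_left ?_
  rw [Quaternion.re_star_dotProduct_self]
  positivity

/-- `x⁰ = A⁺·y` is a least squares solution of the right system `A·x = y`: it minimizes the
ℓ²-norm of the residual `A·x − y` over all quaternion vectors `x`. -/
theorem moore_penrose_least_squares_right (m n : ℕ) (A : Matrix (Fin m) (Fin n) ℍ[ℝ])
    (B : Matrix (Fin n) (Fin m) ℍ[ℝ])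
    (hB1 : (A * B)ᴴ = A * B) (hB2 : (B * A)ᴴ = B * A)
    (hB3 : A * B * A = A) (hB4 : B * A * B = B)
    (y : Fin m → ℍ[ℝ]) :
    ∀ x : Fin n → ℍ[ℝ],
      Real.sqrt (∑ i, ‖A.mulVec (B.mulVec y) i - y i‖ ^ 2) ≤
        Real.sqrt (∑ i, ‖A.mulVec x i - y i‖ ^ 2) :=
  moore_penrose_least_squares_right_general m n A B hB1 hB3 y
end

section
/- Let A ∈ ℍ^{m×n} be a quaternion matrix, let B ∈ ℍ^{n×m} satisfy the four Penrose equations for A, and let y ∈ ℍ^m. Set x⁰ = B·y. Then among all least squares solutions of A·x = y, x⁰ has least norm: for every x ∈ ℍ^n with ‖A·x − y‖ = ‖A·x⁰ − y‖, one has ‖x⁰‖ ≤ ‖x‖, where ‖v‖ = √(Σᵢ |vᵢ|²) is the ℓ²-norm of a quaternion vector. -/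
/-!
Give `ℍⁿ` the real inner product `⟪u, v⟫ = Re (∑ uᵢ v̄ᵢ)`, whose norm is the ℓ²-norm and for which
`Mᴴ` is the adjoint of `M`. The Penrose equations `(AB)ᴴ = AB`, `ABA = A` give `Aᴴ (A x⁰ - y) = 0`,
so `A x - y = A (x - x⁰) + (A x⁰ - y)` is an orthogonal sum: equal residuals force `A x = A x⁰`, hence
`B A x = B A B y = x⁰`. Finally `BA` is a Hermitian idempotent, i.e. an orthogonal projection,
so `‖x⁰‖ = ‖BA x‖ ≤ ‖x‖`.
-/

open scoped Quaternion Matrix InnerProductSpace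

open Matrix WithLp

theorem Quaternion.re_mul_comm {R : Type*} [CommRing R] (a b : ℍ[R]) : (a * b).re = (b * a).re := by
  simp only [Quaternion.re_mul]
  ring

theorem Quaternion.re_sum {R ι : Type*} [CommRing R] (s : Finset ι) (f : ι → ℍ[R]) :
    (∑ i ∈ s, f i).re = ∑ i ∈ s, (f i).re :=
  map_sum (QuaternionAlgebra.reₗ _ _ _) f s

theorem Matrix.conjTranspose_mul_mul_eq_conjTranspose_s10 {m n α : Type*} [Fintype m] [Fintype n]
    [Semiring α] [StarRing α] {A : Matrix m n α} {B : Matrix n m α}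
    (hAB : (A * B)ᴴ = A * B) (hABA : A * B * A = A) : Aᴴ * (A * B) = Aᴴ := by
  conv_lhs => rw [← hAB, ← conjTranspose_mul, hABA]

section QuaternionVectors

variable {ι κ : Type*} [Fintype ι] [Fintype κ]

theorem inner_toLp_mulVec_left (M : Matrix ι κ ℍ[ℝ]) (u : κ → ℍ[ℝ]) (v : ι → ℍ[ℝ]) :
    ⟪toLp 2 (M *ᵥ u), toLp 2 v⟫_ℝ = ⟪toLp 2 u, toLp 2 (Mᴴ *ᵥ v)⟫_ℝ := by
  simp only [PiLp.inner_apply, Quaternion.inner_def, mulVec, dotProduct,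
    conjTranspose_apply, star_sum, star_mul, star_star, Finset.sum_mul, Finset.mul_sum,
    Quaternion.re_sum]
  rw [Finset.sum_comm]
  refine Finset.sum_congr rfl fun j _ => Finset.sum_congr rfl fun i _ => ?_
  rw [mul_assoc, Quaternion.re_mul_comm, mul_assoc]

theorem norm_toLp_mulVec_add_sq {A : Matrix ι κ ℍ[ℝ]} {r : ι → ℍ[ℝ]} (hr : Aᴴ *ᵥ r = 0)
    (v : κ → ℍ[ℝ]) :
    ‖toLp 2 (A *ᵥ v + r)‖ ^ 2 = ‖toLp 2 (A *ᵥ v)‖ ^ 2 + ‖toLp 2 r‖ ^ 2 := by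
  rw [toLp_add, norm_add_sq_real, inner_toLp_mulVec_left, hr, toLp_zero, inner_zero_right,
    mul_zero, add_zero]

theorem mulVec_eq_of_norm_residual_eq {A : Matrix ι κ ℍ[ℝ]} {x₀ x : κ → ℍ[ℝ]} {y : ι → ℍ[ℝ]}
    (hx₀ : Aᴴ *ᵥ (A *ᵥ x₀ - y) = 0)
    (hx : ‖toLp 2 (A *ᵥ x - y)‖ = ‖toLp 2 (A *ᵥ x₀ - y)‖) : A *ᵥ x = A *ᵥ x₀ := by
  have hsplit : A *ᵥ x - y = A *ᵥ (x - x₀) + (A *ᵥ x₀ - y) := by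
    rw [mulVec_sub]; abel
  have hpyth := norm_toLp_mulVec_add_sq hx₀ (x - x₀)
  rw [← hsplit, hx, right_eq_add, sq_eq_zero_iff, norm_eq_zero, toLp_eq_zero, mulVec_sub,
    sub_eq_zero] at hpyth
  exact hpyth

theorem norm_toLp_mulVec_le_of_isHermitian_of_mul_self {P : Matrix ι ι ℍ[ℝ]} (hP : P.IsHermitian)
    (hPP : P * P = P) (x : ι → ℍ[ℝ]) : ‖toLp 2 (P *ᵥ x)‖ ≤ ‖toLp 2 x‖ := by
  have hr : Pᴴ *ᵥ (x - P *ᵥ x) = 0 := by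
    rw [hP.eq, mulVec_sub, mulVec_mulVec, hPP, sub_self]
  have hpyth := norm_toLp_mulVec_add_sq hr x
  rw [add_sub_cancel] at hpyth
  exact le_of_sq_le_sq (by rw [hpyth]; exact le_add_of_nonneg_right (sq_nonneg _))
    (norm_nonneg _)

end QuaternionVectors

/-- `x⁰ = A⁺·y` is the least-norm least squares solution of the right system `A·x = y`:
any `x` achieving the same residual ℓ²-norm satisfies `‖x⁰‖ ≤ ‖x‖`. -/
theorem moore_penrose_minimal_norm_right (m n : ℕ) (A : Matrix (Fin m) (Fin n) ℍ[ℝ])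
    (B : Matrix (Fin n) (Fin m) ℍ[ℝ])
    (hB1 : (A * B)ᴴ = A * B) (hB2 : (B * A)ᴴ = B * A)
    (hB3 : A * B * A = A) (hB4 : B * A * B = B)
    (y : Fin m → ℍ[ℝ]) :
    ∀ x : Fin n → ℍ[ℝ],
      Real.sqrt (∑ i, ‖A.mulVec x i - y i‖ ^ 2) =
          Real.sqrt (∑ i, ‖A.mulVec (B.mulVec y) i - y i‖ ^ 2) →
        Real.sqrt (∑ i, ‖B.mulVec y i‖ ^ 2) ≤ Real.sqrt (∑ i, ‖x i‖ ^ 2) := by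
  intro x hx
  have hres : Aᴴ *ᵥ (A *ᵥ (B *ᵥ y) - y) = 0 := by
    rw [mulVec_sub, mulVec_mulVec, mulVec_mulVec, Matrix.mul_assoc,
      conjTranspose_mul_mul_eq_conjTranspose_s10 hB1 hB3, sub_self]
  have hAx : A *ᵥ x = A *ᵥ (B *ᵥ y) := mulVec_eq_of_norm_residual_eq hres (by
    simpa only [PiLp.norm_eq_of_L2, PiLp.toLp_apply, Pi.sub_apply] using hx)
  have hBAx : (B * A) *ᵥ x = B *ᵥ y := by
    rw [← mulVec_mulVec, hAx, mulVec_mulVec, mulVec_mulVec, hB4]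
  have hproj : B * A * (B * A) = B * A := by rw [← Matrix.mul_assoc, hB4]
  have hle := norm_toLp_mulVec_le_of_isHermitian_of_mul_self hB2 hproj x
  rw [hBAx] at hle
  simpa only [PiLp.norm_eq_of_L2, PiLp.toLp_apply] using hle
end

section
/- Let A ∈ ℍ^{m×n} be a quaternion matrix, let B ∈ ℍ^{n×m} satisfy the four Penrose equations for A, and let y ∈ ℍ^n be a row vector. Set x⁰ = y·B (vector–matrix product). Then for every row vector x ∈ ℍ^m, ‖x⁰·A − y‖ ≤ ‖x·A − y‖, where ‖v‖ = √(Σᵢ |vᵢ|²) is the ℓ²-norm of a quaternion row vector. That is, x⁰ = y·B minimizes ‖x·A − y‖ over all row vectors x ∈ ℍ^m. -/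
open scoped Quaternion Matrix InnerProductSpace

/-!
Write `x·A − y = (x − y·B)·A + (y·B·A − y)`. The second summand is `y·(B·A − 1)`, and since
`(B·A − 1)ᴴ = B·A − 1` and `A·(B·A − 1) = 0`, it is orthogonal (for the real inner product
`Re (u·vᴴ)`) to every vector of the form `z·A`. Pythagoras then gives
`‖x·A − y‖² = ‖(x − y·B)·A‖² + ‖y·B·A − y‖² ≥ ‖y·B·A − y‖²`.
-/

theorem Matrix.vecMul_dotProduct_star_vecMul_mul_sub_eq_zero {R : Type*} {m n : Type*}
    [Fintype m] [Fintype n] [Ring R] [StarRing R] {A : Matrix m n R} {B : Matrix n m R}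
    (hBA : (B * A)ᴴ = B * A) (hABA : A * B * A = A) (z : m → R) (y : n → R) :
    (z ᵥ* A) ⬝ᵥ star (y ᵥ* (B * A) - y) = 0 := by
  rw [star_sub, Matrix.star_vecMul, hBA, dotProduct_sub, Matrix.dotProduct_mulVec,
    Matrix.vecMul_vecMul, ← Matrix.mul_assoc, hABA, sub_self]

theorem Quaternion.sum_inner_eq_re_dotProduct_star {ι : Type*} [Fintype ι] (u v : ι → ℍ[ℝ]) :
    ∑ i, ⟪u i, v i⟫_ℝ = (u ⬝ᵥ star v).re := by
  simp only [Quaternion.inner_def, dotProduct, Pi.star_apply]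
  exact (map_sum (QuaternionAlgebra.reₗ (-1 : ℝ) 0 (-1)) (fun i => u i * star (v i)) _).symm

theorem sum_norm_sq_le_sum_norm_add_sq {ι E : Type*} [Fintype ι] [NormedAddCommGroup E]
    [InnerProductSpace ℝ E] (u v : ι → E) (huv : ∑ i, ⟪u i, v i⟫_ℝ = 0) :
    ∑ i, ‖v i‖ ^ 2 ≤ ∑ i, ‖u i + v i‖ ^ 2 := by
  simp only [norm_add_sq_real, Finset.sum_add_distrib, ← Finset.mul_sum, huv, mul_zero, add_zero]
  exact le_add_of_nonneg_left (Finset.sum_nonneg fun i _ => sq_nonneg ‖u i‖)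

theorem moore_penrose_least_squares_left_general (m n : ℕ) (A : Matrix (Fin m) (Fin n) ℍ[ℝ])
    (B : Matrix (Fin n) (Fin m) ℍ[ℝ])
    (hB2 : (B * A)ᴴ = B * A)
    (hB3 : A * B * A = A)
    (y : Fin n → ℍ[ℝ]) :
    ∀ x : Fin m → ℍ[ℝ],
      Real.sqrt (∑ j, ‖Matrix.vecMul (Matrix.vecMul y B) A j - y j‖ ^ 2) ≤
        Real.sqrt (∑ j, ‖Matrix.vecMul x A j - y j‖ ^ 2) := by
  intro x
  have hsplit : ∀ j, (x ᵥ* A) j - y j = ((x - y ᵥ* B) ᵥ* A) j + (y ᵥ* B ᵥ* A - y) j := by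
    intro j
    simp only [Matrix.sub_vecMul, Pi.sub_apply]
    abel
  have horth : ∑ j, ⟪((x - y ᵥ* B) ᵥ* A) j, (y ᵥ* B ᵥ* A - y) j⟫_ℝ = 0 := by
    rw [Quaternion.sum_inner_eq_re_dotProduct_star, Matrix.vecMul_vecMul,
      Matrix.vecMul_dotProduct_star_vecMul_mul_sub_eq_zero hB2 hB3, Quaternion.re_zero]
  refine Real.sqrt_le_sqrt ?_
  simp only [hsplit]
  exact sum_norm_sq_le_sum_norm_add_sq _ _ horth

/-- `x⁰ = y·A⁺` is a least squares solution of the left system `x·A = y`: it minimizes the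
ℓ²-norm of the residual `x·A − y` over all quaternion row vectors `x`. -/
theorem moore_penrose_least_squares_left (m n : ℕ) (A : Matrix (Fin m) (Fin n) ℍ[ℝ])
    (B : Matrix (Fin n) (Fin m) ℍ[ℝ])
    (hB1 : (A * B)ᴴ = A * B) (hB2 : (B * A)ᴴ = B * A)
    (hB3 : A * B * A = A) (hB4 : B * A * B = B)
    (y : Fin n → ℍ[ℝ]) :
    ∀ x : Fin m → ℍ[ℝ],
      Real.sqrt (∑ j, ‖Matrix.vecMul (Matrix.vecMul y B) A j - y j‖ ^ 2) ≤
        Real.sqrt (∑ j, ‖Matrix.vecMul x A j - y j‖ ^ 2) :=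
  moore_penrose_least_squares_left_general m n A B hB2 hB3 y
end

section
/- Let A ∈ ℍ^{m×n} be a quaternion matrix, let B ∈ ℍ^{n×m} satisfy the four Penrose equations for A, and let y ∈ ℍ^n be a row vector. Set x⁰ = y·B. Then among all least squares solutions of the left system x·A = y, x⁰ has least norm: for every row vector x ∈ ℍ^m with ‖x·A − y‖ = ‖x⁰·A − y‖, one has ‖x⁰‖ ≤ ‖x‖, where ‖v‖ = √(Σᵢ |vᵢ|²) is the ℓ²-norm of a quaternion row vector. -/
/-!
Write `z = y·B` and view row vectors as elements of the real inner product space `ℓ²`, where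
`⟪u·M, v⟫ = ⟪u, v·Mᴴ⟫`. Since `B·A·Aᴴ = (A·B·A)ᴴ = Aᴴ`, the residual `z·A − y` is orthogonal
to the range of `· A`, so `‖x·A − y‖² = ‖(x − z)·A‖² + ‖z·A − y‖²` and an equal residual forces
`(x − z)·A = 0`. Since `z = z·(A·B)` and `A·B` is Hermitian, `z` is orthogonal to every `w`
with `w·A = 0`, in particular to `x − z`; Pythagoras then gives `‖z‖ ≤ ‖x‖`.
-/

open scoped Quaternion Matrix InnerProductSpace
open Matrix

variable {m n : Type*} [Fintype m] [Fintype n]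

theorem Quaternion.inner_mul_eq_inner_mul_star (a b c : ℍ[ℝ]) :
    ⟪a * c, b⟫_ℝ = ⟪a, b * star c⟫_ℝ := by
  rw [inner_def, inner_def, star_mul, star_star, mul_assoc]

namespace Matrix

theorem mul_mul_conjTranspose_eq_conjTranspose {α : Type*} [Semiring α] [StarRing α]
    {A : Matrix m n α} {B : Matrix n m α} (hBA : (B * A)ᴴ = B * A) (hABA : A * B * A = A) :
    B * A * Aᴴ = Aᴴ := by
  rw [← hBA, ← conjTranspose_mul, ← Matrix.mul_assoc, hABA]

theorem inner_vecMul_eq_inner_vecMul_conjTranspose (w : m → ℍ[ℝ])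
    (M : Matrix m n ℍ[ℝ]) (v : n → ℍ[ℝ]) :
    ⟪WithLp.toLp 2 (w ᵥ* M), WithLp.toLp 2 v⟫_ℝ =
      ⟪WithLp.toLp 2 w, WithLp.toLp 2 (v ᵥ* Mᴴ)⟫_ℝ := by
  simp only [PiLp.inner_apply, vecMul, dotProduct, conjTranspose_apply, sum_inner, inner_sum,
    Quaternion.inner_mul_eq_inner_mul_star]
  exact Finset.sum_comm

variable {A : Matrix m n ℍ[ℝ]} {B : Matrix n m ℍ[ℝ]}

theorem inner_vecMul_residual_eq_zero (hBA : (B * A)ᴴ = B * A) (hABA : A * B * A = A)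
    (y : n → ℍ[ℝ]) (w : m → ℍ[ℝ]) :
    ⟪WithLp.toLp 2 (w ᵥ* A), WithLp.toLp 2 (y ᵥ* B ᵥ* A - y)⟫_ℝ = 0 := by
  rw [inner_vecMul_eq_inner_vecMul_conjTranspose, sub_vecMul, vecMul_vecMul, vecMul_vecMul,
    ← Matrix.mul_assoc, mul_mul_conjTranspose_eq_conjTranspose hBA hABA, sub_self,
    WithLp.toLp_zero, inner_zero_right]

theorem norm_residual_sq (hBA : (B * A)ᴴ = B * A) (hABA : A * B * A = A)
    (y : n → ℍ[ℝ]) (x : m → ℍ[ℝ]) :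
    ‖WithLp.toLp 2 (x ᵥ* A - y)‖ ^ 2 =
      ‖WithLp.toLp 2 ((x - y ᵥ* B) ᵥ* A)‖ ^ 2 + ‖WithLp.toLp 2 (y ᵥ* B ᵥ* A - y)‖ ^ 2 := by
  have hsplit : x ᵥ* A - y = (x - y ᵥ* B) ᵥ* A + (y ᵥ* B ᵥ* A - y) := by
    rw [sub_vecMul]; abel
  rw [hsplit, WithLp.toLp_add, norm_add_sq_real, inner_vecMul_residual_eq_zero hBA hABA]
  ring

theorem sub_vecMul_eq_zero_of_norm_residual_eq (hBA : (B * A)ᴴ = B * A)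
    (hABA : A * B * A = A) (y : n → ℍ[ℝ]) {x : m → ℍ[ℝ]}
    (hx : ‖WithLp.toLp 2 (x ᵥ* A - y)‖ = ‖WithLp.toLp 2 (y ᵥ* B ᵥ* A - y)‖) :
    (x - y ᵥ* B) ᵥ* A = 0 := by
  have hsq := norm_residual_sq hBA hABA y x
  rw [hx, right_eq_add, sq_eq_zero_iff, norm_eq_zero] at hsq
  exact congrArg WithLp.ofLp hsq

theorem inner_vecMul_eq_zero_of_vecMul_eq_zero (hAB : (A * B)ᴴ = A * B)
    (hBAB : B * A * B = B) (y : n → ℍ[ℝ]) {w : m → ℍ[ℝ]} (hw : w ᵥ* A = 0) :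
    ⟪WithLp.toLp 2 (y ᵥ* B), WithLp.toLp 2 w⟫_ℝ = 0 := by
  have hz : y ᵥ* B = y ᵥ* B ᵥ* (A * B) := by
    rw [vecMul_vecMul, ← Matrix.mul_assoc, hBAB]
  rw [hz, inner_vecMul_eq_inner_vecMul_conjTranspose, hAB, ← vecMul_vecMul, hw, zero_vecMul,
    WithLp.toLp_zero, inner_zero_right]

theorem norm_vecMul_le_of_norm_residual_eq (hAB : (A * B)ᴴ = A * B)
    (hBA : (B * A)ᴴ = B * A) (hABA : A * B * A = A) (hBAB : B * A * B = B)
    (y : n → ℍ[ℝ]) {x : m → ℍ[ℝ]}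
    (hx : ‖WithLp.toLp 2 (x ᵥ* A - y)‖ = ‖WithLp.toLp 2 (y ᵥ* B ᵥ* A - y)‖) :
    ‖WithLp.toLp 2 (y ᵥ* B)‖ ≤ ‖WithLp.toLp 2 x‖ := by
  have horth := inner_vecMul_eq_zero_of_vecMul_eq_zero hAB hBAB y
    (sub_vecMul_eq_zero_of_norm_residual_eq hBA hABA y hx)
  have hpyth := norm_add_sq_real (WithLp.toLp 2 (y ᵥ* B)) (WithLp.toLp 2 (x - y ᵥ* B))
  rw [horth, ← WithLp.toLp_add, add_sub_cancel] at hpyth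
  refine le_of_pow_le_pow_left₀ two_ne_zero (norm_nonneg _) ?_
  rw [hpyth, mul_zero, add_zero]
  exact le_add_of_nonneg_right (sq_nonneg _)

end Matrix

/-- `x⁰ = y·A⁺` is the least-norm least squares solution of the left system `x·A = y`:
any row vector `x` achieving the same residual ℓ²-norm satisfies `‖x⁰‖ ≤ ‖x‖`. -/
theorem moore_penrose_minimal_norm_left (m n : ℕ) (A : Matrix (Fin m) (Fin n) ℍ[ℝ])
    (B : Matrix (Fin n) (Fin m) ℍ[ℝ])
    (hB1 : (A * B)ᴴ = A * B) (hB2 : (B * A)ᴴ = B * A)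
    (hB3 : A * B * A = A) (hB4 : B * A * B = B)
    (y : Fin n → ℍ[ℝ]) :
    ∀ x : Fin m → ℍ[ℝ],
      Real.sqrt (∑ j, ‖Matrix.vecMul x A j - y j‖ ^ 2) =
          Real.sqrt (∑ j, ‖Matrix.vecMul (Matrix.vecMul y B) A j - y j‖ ^ 2) →
        Real.sqrt (∑ i, ‖Matrix.vecMul y B i‖ ^ 2) ≤ Real.sqrt (∑ i, ‖x i‖ ^ 2) := by
  intro x hx
  simpa only [PiLp.norm_eq_of_L2, Pi.sub_apply] using
    norm_vecMul_le_of_norm_residual_eq hB1 hB2 hB3 hB4 y (x := x)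
      (by simpa only [PiLp.norm_eq_of_L2, Pi.sub_apply] using hx)
end

section
/- Every right eigenvalue of a Hermitian quaternion matrix is real: if A ∈ ℍ^{n×n} satisfies Aᴴ = A and λ ∈ ℍ is such that there exists a nonzero vector x ∈ ℍ^n with A·x = x·λ (componentwise, (A·x)ᵢ = xᵢ·λ for all i), then λ is a real quaternion, i.e. its three imaginary parts vanish. -/
/-!
The Rayleigh quotient `xᴴ A x` is self-adjoint because `A` is Hermitian, and by the eigen-equation
it equals `(xᴴ x) λ`. Since `xᴴ x = ∑ |xᵢ|²` is a nonzero real number, it is central and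
cancellable, so `λ̄ = λ`.
-/

open scoped Quaternion Matrix

open Matrix

theorem Matrix.IsHermitian.isSelfAdjoint_star_dotProduct_mulVec {α n : Type*} [Fintype n]
    [NonUnitalSemiring α] [StarRing α] {A : Matrix n n α} (hA : A.IsHermitian) (x : n → α) :
    IsSelfAdjoint (star x ⬝ᵥ A *ᵥ x) := by
  rw [isSelfAdjoint_iff, ← star_dotProduct_star, star_star, star_mulVec, hA.eq,
    ← dotProduct_mulVec]

theorem Matrix.dotProduct_mul_const {α n : Type*} [Fintype n] [NonUnitalSemiring α]
    (v w : n → α) (c : α) : (v ⬝ᵥ fun i => w i * c) = (v ⬝ᵥ w) * c := by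
  simp only [dotProduct, Finset.sum_mul, mul_assoc]

theorem IsSelfAdjoint.of_mul_left {R : Type*} [Mul R] [StarMul R] {s c : R}
    (hs : IsSelfAdjoint s) (hsc : Commute s c) (hreg : IsLeftRegular s)
    (h : IsSelfAdjoint (s * c)) : IsSelfAdjoint c := by
  refine hreg ?_
  change s * star c = s * c
  calc s * star c = star c * s := by simpa only [hs.star_eq] using hsc.star_star.eq
    _ = star (s * c) := by rw [star_mul, hs.star_eq]
    _ = s * c := h.star_eq

namespace Quaternion

variable {R n : Type*} [Fintype n]

theorem star_dotProduct_self [CommRing R] (x : n → ℍ[R]) :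
    star x ⬝ᵥ x = ((∑ i, normSq (x i) : R) : ℍ[R]) := by
  simp only [dotProduct, Pi.star_apply, star_mul_self, ← algebraMap_def, map_sum]

theorem sum_normSq_ne_zero [CommRing R] [LinearOrder R] [IsStrictOrderedRing R]
    {x : n → ℍ[R]} (hx : x ≠ 0) : ∑ i, normSq (x i) ≠ 0 := by
  rw [Ne, Finset.sum_eq_zero_iff_of_nonneg fun i _ => normSq_nonneg]
  simpa [funext_iff] using hx

theorem isSelfAdjoint_iff [CommRing R] [NoZeroDivisors R] [CharZero R] {a : ℍ[R]} :
    IsSelfAdjoint a ↔ a.imI = 0 ∧ a.imJ = 0 ∧ a.imK = 0 := by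
  rw [_root_.isSelfAdjoint_iff, star_eq_self, Quaternion.ext_iff]
  simp

end Quaternion

/-- Every right eigenvalue of a Hermitian quaternion matrix is real. -/
theorem right_eigenvalue_of_hermitian_is_real (n : ℕ) (A : Matrix (Fin n) (Fin n) ℍ[ℝ])
    (hA : Aᴴ = A) (lam : ℍ[ℝ]) (x : Fin n → ℍ[ℝ]) (hx : x ≠ 0)
    (heig : ∀ i, A.mulVec x i = x i * lam) :
    lam.imI = 0 ∧ lam.imJ = 0 ∧ lam.imK = 0 := by
  set r := ∑ i, Quaternion.normSq (x i)
  have hxx : star x ⬝ᵥ x = (r : ℍ[ℝ]) := Quaternion.star_dotProduct_self x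
  have hr : (r : ℍ[ℝ]) ≠ 0 := Quaternion.coe_injective.ne (Quaternion.sum_normSq_ne_zero hx)
  have hrayleigh : star x ⬝ᵥ A *ᵥ x = (r : ℍ[ℝ]) * lam := by
    rw [← hxx, ← dotProduct_mul_const, ← funext heig]
  refine Quaternion.isSelfAdjoint_iff.mp (IsSelfAdjoint.of_mul_left (Quaternion.star_coe r)
    (Quaternion.coe_commute r lam) (IsRegular.of_ne_zero hr).left ?_)
  exact hrayleigh ▸ IsHermitian.isSelfAdjoint_star_dotProduct_mulVec hA x
end
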